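/- Let Q(ρ) = (384√6 − ρ²(ρ² + 24√6 − 44) − 956)/(ρ² + 6√6 − 14)² and q(ρ) = ρ²/16 + 12/ρ² + 3/4 + Q(ρ). Then for every compactly supported, continuously differentiable function v : [0,∞) → ℂ with v(0) = 0, one has ∫₀^∞ |v'(ρ)|² dρ + ∫₀^∞ q(ρ) |v(ρ)|² dρ ≥ (1/75) ∫₀^∞ |v(ρ)|² dρ. -/

import Mathlib

open MeasureTheory Set

/-- `Q(ρ) = (384√6 − ρ²(ρ² + 24√6 − 44) − 956)/(ρ² + 6√6 − 14)²`. -/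
noncomputable def Qpot (ρ : ℝ) : ℝ :=
  (384 * Real.sqrt 6 - ρ^2 * (ρ^2 + 24 * Real.sqrt 6 - 44) - 956) /
    (ρ^2 + 6 * Real.sqrt 6 - 14)^2

/-- `q(ρ) = ρ²/16 + 12/ρ² + 3/4 + Q(ρ)`, the potential of the supersymmetric partner. -/
noncomputable def qpot (ρ : ℝ) : ℝ := ρ^2/16 + 12/ρ^2 + 3/4 + Qpot ρ

noncomputable def Wsusy (ρ : ℝ) : ℝ :=
  -3/ρ + ρ/4 + 2*ρ/(ρ^2 + (6*Real.sqrt 6 - 14))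

noncomputable def Wdsusy (ρ : ℝ) : ℝ :=
  3/ρ^2 + 1/4 + 2*((6*Real.sqrt 6 - 14) - ρ^2)/(ρ^2 + (6*Real.sqrt 6 - 14))^2

lemma sqrt6_sq : (Real.sqrt 6)^2 = 6 := Real.sq_sqrt (by norm_num)

lemma sqrt6_lb : 2.449 ≤ Real.sqrt 6 := by
  nlinarith [sqrt6_sq, Real.sqrt_nonneg 6]

lemma sqrt6_ub : Real.sqrt 6 ≤ 2.4495 := by
  nlinarith [sqrt6_sq, Real.sqrt_nonneg 6]

lemma cpos : 0 < 6*Real.sqrt 6 - 14 := by nlinarith [sqrt6_lb]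

lemma denpos (ρ : ℝ) : 0 < ρ^2 + (6*Real.sqrt 6 - 14) :=
  add_pos_of_nonneg_of_pos (sq_nonneg ρ) cpos

lemma key_ineq {ρ : ℝ} (hρ : 0 < ρ) : (Wsusy ρ)^2 - Wdsusy ρ ≤ qpot ρ - 1/75 := by
  have hs := sqrt6_sq
  have hs1 := sqrt6_lb
  have hs2 := sqrt6_ub
  set s := Real.sqrt 6 with hsdef
  have hc : 0 < 6*s - 14 := cpos
  have hd : 0 < ρ^2 + (6*s - 14) := denpos ρ
  have hne : ρ ≠ 0 := hρ.ne'
  have hdne : ρ^2 + (6*s - 14) ≠ 0 := hd.ne'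
  have hρ2 : 0 < ρ^2 := by positivity
  have hP : 0 ≤ 6*(ρ^2+(6*s-14))^2 + (373/150)*ρ^2*(ρ^2+(6*s-14))^2
      + ρ^2*(-2*(ρ^2)^2 + (64-30*s)*ρ^2 + 468*s - 1152) := by
    nlinarith [sq_nonneg (ρ^2-2), sq_nonneg (ρ^2-3), sq_nonneg (ρ^2-4), sq_nonneg (ρ^2),
      sq_nonneg (ρ^2*(ρ^2-3)), mul_pos hρ2 hρ2, sq_nonneg (s-2.4495), sq_nonneg (ρ^2*s)]
  have heq : qpot ρ - 1/75 - ((Wsusy ρ)^2 - Wdsusy ρ)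
      = (6*(ρ^2+(6*s-14))^2 + (373/150)*ρ^2*(ρ^2+(6*s-14))^2
        + ρ^2*(-2*(ρ^2)^2 + (64-30*s)*ρ^2 + 468*s - 1152))
        / (ρ^2*(ρ^2+(6*s-14))^2) := by
    rw [qpot, Qpot, Wsusy, Wdsusy, ← hsdef]
    have h2 : ρ^2 + 6*s - 14 = ρ^2 + (6*s-14) := by ring
    rw [h2]
    have hdne2 : ρ^2 + (s*6 - 14) ≠ 0 := by rw [mul_comm]; exact hdne
    field_simp
    ring
  have hpos : 0 < ρ^2*(ρ^2+(6*s-14))^2 := by positivity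
  have := div_nonneg hP hpos.le
  linarith [heq ▸ this]

lemma Wsusy_hasDeriv {ρ : ℝ} (hρ : 0 < ρ) : HasDerivAt Wsusy (Wdsusy ρ) ρ := by
  have hne : ρ ≠ 0 := hρ.ne'
  have hd : ρ^2 + (6*Real.sqrt 6 - 14) ≠ 0 := (denpos ρ).ne'
  have h1 : HasDerivAt (fun x : ℝ => -3/x) (3/ρ^2) ρ := by
    have := (hasDerivAt_inv hne).const_mul (-3 : ℝ)
    refine this.congr_deriv ?_
    field_simp
  have h2 : HasDerivAt (fun x : ℝ => x/4) (1/4) ρ := by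
    simpa using (hasDerivAt_id ρ).div_const 4
  have hnum : HasDerivAt (fun x : ℝ => 2*x) 2 ρ := by
    simpa using (hasDerivAt_id ρ).const_mul (2:ℝ)
  have hden : HasDerivAt (fun x : ℝ => x^2 + (6*Real.sqrt 6 - 14)) (2*ρ) ρ := by
    simpa using (hasDerivAt_pow 2 ρ).add_const (6*Real.sqrt 6 - 14)
  have h3 : HasDerivAt (fun x : ℝ => 2*x/(x^2 + (6*Real.sqrt 6 - 14)))
      (2*((6*Real.sqrt 6 - 14) - ρ^2)/(ρ^2 + (6*Real.sqrt 6 - 14))^2) ρ := by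
    have := hnum.div hden hd
    refine this.congr_deriv ?_
    field_simp
    ring
  have := (h1.add h2).add h3
  exact this
open MeasureTheory Set Filter

lemma intOn_helper {g : ℝ → ℝ} {M K : ℝ} (hM : 0 < M)
    (hc : ContinuousOn g (Ioi 0)) (hz : ∀ ρ, M < ρ → g ρ = 0)
    (hb : ∀ ρ ∈ Ioc (0:ℝ) M, |g ρ| ≤ K) : IntegrableOn g (Ioi 0) := by
  have h1 : IntegrableOn g (Ioc 0 M) := by
    refine ⟨(hc.mono Ioc_subset_Ioi_self).aestronglyMeasurable measurableSet_Ioc, ?_⟩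
    apply HasFiniteIntegral.restrict_of_bounded (C := K) (by simp)
    filter_upwards [ae_restrict_mem measurableSet_Ioc] with x hx
    simpa [Real.norm_eq_abs] using hb x hx
  have h2 : IntegrableOn g (Ioi M) :=
    (integrableOn_zero (ε' := ℝ)).congr_fun (fun x hx => (hz x hx).symm) measurableSet_Ioi
  exact (h1.union h2).mono_set fun x hx => (le_or_gt x M).imp (fun h => ⟨hx, h⟩) id

noncomputable def WAf (ρ : ℝ) : ℝ := -3 + ρ^2/4 + 2*ρ^2/(ρ^2+(6*Real.sqrt 6-14))

noncomputable def WBf (ρ : ℝ) : ℝ :=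
  3 + ρ^2/4 + 2*ρ^2*((6*Real.sqrt 6-14)-ρ^2)/(ρ^2+(6*Real.sqrt 6-14))^2

lemma den_ne (ρ : ℝ) : ρ^2+(6*Real.sqrt 6-14) ≠ 0 := (denpos ρ).ne'

lemma WAf_cont : Continuous WAf := by
  unfold WAf
  refine (continuous_const.add ((continuous_pow 2).div_const 4)).add
    ((continuous_const.mul (continuous_pow 2)).div
      ((continuous_pow 2).add continuous_const) den_ne)

lemma WBf_cont : Continuous WBf := by
  unfold WBf
  refine (continuous_const.add ((continuous_pow 2).div_const 4)).add
    (Continuous.div (by continuity) (by continuity) ?_)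
  exact fun x => pow_ne_zero 2 (den_ne x)

lemma Qpot_cont : Continuous Qpot := by
  unfold Qpot
  refine Continuous.div (by continuity) (by continuity) ?_
  intro x
  have h : x^2 + 6*Real.sqrt 6 - 14 = x^2 + (6*Real.sqrt 6 - 14) := by ring
  rw [h]
  exact pow_ne_zero 2 (den_ne x)

lemma WAf_eq {ρ : ℝ} (hρ : ρ ≠ 0) : Wsusy ρ = WAf ρ / ρ := by
  unfold Wsusy WAf
  field_simp

lemma WBf_eq {ρ : ℝ} (hρ : ρ ≠ 0) : Wdsusy ρ = WBf ρ / ρ^2 := by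
  unfold Wdsusy WBf
  have := den_ne ρ
  field_simp

lemma qpot_contOn : ContinuousOn qpot (Ioi 0) := by
  unfold qpot
  refine ContinuousOn.add (ContinuousOn.add (ContinuousOn.add
    ((continuous_pow 2).continuousOn.div_const 16) ?_) continuousOn_const)
    Qpot_cont.continuousOn
  exact ContinuousOn.div continuousOn_const (continuous_pow 2).continuousOn
    (fun x hx => pow_ne_zero 2 (ne_of_gt hx))

lemma Wsusy_contOn : ContinuousOn Wsusy (Ioi 0) :=
  fun ρ hρ => (Wsusy_hasDeriv hρ).continuousAt.continuousWithinAt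

lemma Wdsusy_contOn : ContinuousOn Wdsusy (Ioi 0) := by
  unfold Wdsusy
  refine ContinuousOn.add (ContinuousOn.add
    (ContinuousOn.div continuousOn_const (continuous_pow 2).continuousOn
      (fun x hx => pow_ne_zero 2 (ne_of_gt hx))) continuousOn_const)
    (Continuous.continuousOn (Continuous.div (by continuity) (by continuity)
      (fun x => pow_ne_zero 2 (den_ne x))))
set_option maxHeartbeats 2000000 in
/-- The quadratic form of the supersymmetric partner operator is bounded below by `1/75`:
for every compactly supported `C¹` function `v : [0,∞) → ℂ` with `v(0) = 0`,
`∫₀^∞ |v'|² + ∫₀^∞ q|v|² ≥ (1/75) ∫₀^∞ |v|²`. -/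
theorem stmt11 (v : ℝ → ℂ) (hv : ContDiffOn ℝ 1 v (Ici 0))
    (hsupp : ∃ M : ℝ, ∀ ρ : ℝ, M ≤ ρ → v ρ = 0) (h0 : v 0 = 0) :
    (1/75) * ∫ ρ in Ioi (0:ℝ), ‖v ρ‖^2
      ≤ (∫ ρ in Ioi (0:ℝ), ‖deriv v ρ‖^2) + ∫ ρ in Ioi (0:ℝ), qpot ρ * ‖v ρ‖^2 := by
  obtain ⟨M₀, hM₀⟩ := hsupp
  set M : ℝ := max M₀ 1 with hMdef
  have hM1 : (1:ℝ) ≤ M := le_max_right _ _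
  have hMpos : (0:ℝ) < M := lt_of_lt_of_le one_pos hM1
  have hvz : ∀ ρ, M ≤ ρ → v ρ = 0 := fun ρ h => hM₀ ρ (le_trans (le_max_left _ _) h)
  -- derivative facts
  have hder : ∀ ρ ∈ Ioi (0:ℝ), HasDerivAt v (deriv v ρ) ρ := fun ρ hρ =>
    ((hv.contDiffAt (Ici_mem_nhds hρ)).differentiableAt one_ne_zero).hasDerivAt
  have hdc : ContinuousOn (deriv v) (Ioi 0) :=
    (hv.mono Ioi_subset_Ici_self).continuousOn_deriv_of_isOpen isOpen_Ioi le_rfl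
  have hvc : ContinuousOn v (Ici 0) := hv.continuousOn
  have hdz : ∀ ρ, M < ρ → deriv v ρ = 0 := by
    intro ρ hρ
    have hev : v =ᶠ[nhds ρ] (fun _ => 0) := by
      filter_upwards [Ioi_mem_nhds hρ] with x hx; exact hvz x hx.le
    rw [hev.deriv_eq]; simp
  -- sup bound on derivative on [0, M]
  have hdw : ContinuousOn (derivWithin v (Ici 0)) (Ici 0) :=
    hv.continuousOn_derivWithin (uniqueDiffOn_Ici 0) le_rfl
  obtain ⟨D, hD⟩ := (isCompact_Icc (a := (0:ℝ)) (b := M)).exists_bound_of_continuousOn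
    (hdw.mono Icc_subset_Ici_self)
  have hD0 : 0 ≤ D := le_trans (norm_nonneg _) (hD 0 ⟨le_rfl, hMpos.le⟩)
  have hdd : ∀ ρ ∈ Ioi (0:ℝ), derivWithin v (Ici 0) ρ = deriv v ρ := fun ρ hρ =>
    derivWithin_of_mem_nhds (Ici_mem_nhds hρ)
  have hDb : ∀ ρ ∈ Ioc (0:ℝ) M, ‖deriv v ρ‖ ≤ D := fun ρ hρ =>
    (hdd ρ hρ.1) ▸ hD ρ ⟨hρ.1.le, hρ.2⟩
  -- |v ρ| ≤ D ρ
  have hvb : ∀ ρ ∈ Ioi (0:ℝ), ‖v ρ‖ ≤ D * ρ := by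
    intro ρ hρ
    rcases le_or_gt ρ M with h | h
    · have key := Convex.norm_image_sub_le_of_norm_hasDerivWithin_le
        (f := v) (f' := derivWithin v (Ici 0)) (s := Icc 0 M) (C := D)
        (fun x hx => ((hv.differentiableOn one_ne_zero x hx.1).hasDerivWithinAt).mono
          Icc_subset_Ici_self)
        (fun x hx => hD x hx) (convex_Icc _ _) ⟨le_rfl, hMpos.le⟩ ⟨le_of_lt hρ, h⟩
      simpa [h0, abs_of_nonneg (le_of_lt (mem_Ioi.mp hρ))] using key
    · rw [hvz ρ h.le]; simpa using mul_nonneg hD0 (le_of_lt hρ)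
  -- bounds for the regularized functions on [0, M]
  obtain ⟨K1, hK1⟩ := (isCompact_Icc (a := (0:ℝ)) (b := M)).exists_bound_of_continuousOn
    WAf_cont.continuousOn
  obtain ⟨K2, hK2⟩ := (isCompact_Icc (a := (0:ℝ)) (b := M)).exists_bound_of_continuousOn
    WBf_cont.continuousOn
  obtain ⟨K3, hK3⟩ := (isCompact_Icc (a := (0:ℝ)) (b := M)).exists_bound_of_continuousOn
    Qpot_cont.continuousOn
  have hK10 : 0 ≤ K1 := le_trans (norm_nonneg _) (hK1 0 ⟨le_rfl, hMpos.le⟩)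
  have hK20 : 0 ≤ K2 := le_trans (norm_nonneg _) (hK2 0 ⟨le_rfl, hMpos.le⟩)
  have hK30 : 0 ≤ K3 := le_trans (norm_nonneg _) (hK3 0 ⟨le_rfl, hMpos.le⟩)
  -- basic pointwise bounds on (0, M]
  have hnv2 : ∀ ρ ∈ Ioc (0:ℝ) M, ‖v ρ‖^2 ≤ D^2*ρ^2 := by
    intro ρ hρ
    have h := hvb ρ hρ.1
    nlinarith [norm_nonneg (v ρ)]
  have hnvM : ∀ ρ ∈ Ioc (0:ℝ) M, ‖v ρ‖^2 ≤ D^2*M^2 := by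
    intro ρ hρ
    have h := hnv2 ρ hρ
    have h2 : ρ^2 ≤ M^2 := by nlinarith [hρ.1.le, hρ.2]
    nlinarith [sq_nonneg D]
  have hWabs : ∀ ρ ∈ Ioc (0:ℝ) M, |Wsusy ρ| = |WAf ρ|/ρ := by
    intro ρ hρ
    rw [WAf_eq hρ.1.ne', abs_div, abs_of_pos hρ.1]
  have hWdabs : ∀ ρ ∈ Ioc (0:ℝ) M, |Wdsusy ρ| = |WBf ρ|/ρ^2 := by
    intro ρ hρ
    rw [WBf_eq hρ.1.ne', abs_div, abs_of_pos (pow_pos hρ.1 2)]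
  -- the three decomposition functions
  set g1 : ℝ → ℝ := fun ρ => ‖deriv v ρ + (Wsusy ρ : ℂ) * v ρ‖^2 with hg1def
  set g2 : ℝ → ℝ := fun ρ => (qpot ρ - 1/75 - (Wsusy ρ)^2 + Wdsusy ρ) * ‖v ρ‖^2 with hg2def
  set g3 : ℝ → ℝ := fun ρ => -(Wdsusy ρ * ‖v ρ‖^2
      + Wsusy ρ * (2*((v ρ).re*(deriv v ρ).re + (v ρ).im*(deriv v ρ).im))) with hg3def
  have normsq_eq : ∀ z : ℂ, ‖z‖^2 = z.re^2 + z.im^2 := by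
    intro z
    rw [Complex.sq_norm, Complex.normSq_apply]
    ring
  -- pointwise identity
  have hpt : ∀ ρ ∈ Ioi (0:ℝ),
      ‖deriv v ρ‖^2 + qpot ρ * ‖v ρ‖^2 - (1/75) * ‖v ρ‖^2 = g1 ρ + g2 ρ + g3 ρ := by
    intro ρ _
    simp only [hg1def, hg2def, hg3def]
    rw [normsq_eq, normsq_eq, normsq_eq]
    simp only [Complex.add_re, Complex.add_im, Complex.mul_re, Complex.mul_im,
      Complex.ofReal_re, Complex.ofReal_im]
    ring
  -- integrability of the basic pieces
  have hvcIoi : ContinuousOn v (Ioi 0) := hvc.mono Ioi_subset_Ici_self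
  have hnv_cont : ContinuousOn (fun ρ => ‖v ρ‖^2) (Ioi 0) := (hvcIoi.norm).pow 2
  have hInv : IntegrableOn (fun ρ => ‖v ρ‖^2) (Ioi 0) := by
    apply intOn_helper hMpos hnv_cont (fun ρ hρ => by rw [hvz ρ hρ.le]; simp)
    intro ρ hρ
    rw [abs_of_nonneg (by positivity)]
    exact hnvM ρ hρ
  have hIdv : IntegrableOn (fun ρ => ‖deriv v ρ‖^2) (Ioi 0) := by
    apply intOn_helper (g := fun ρ => ‖deriv v ρ‖^2) (K := D^2) hMpos ((hdc.norm).pow 2)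
      (fun ρ hρ => by rw [hdz ρ hρ]; simp)
    intro ρ hρ
    rw [abs_of_nonneg (by positivity)]
    have h := hDb ρ hρ
    nlinarith [norm_nonneg (deriv v ρ)]
  have hIq : IntegrableOn (fun ρ => qpot ρ * ‖v ρ‖^2) (Ioi 0) := by
    apply intOn_helper (g := fun ρ => qpot ρ * ‖v ρ‖^2) (K := (M^2/16 + 3/4 + K3)*(D^2*M^2) + 12*D^2) hMpos
      (qpot_contOn.mul hnv_cont) (fun ρ hρ => by rw [hvz ρ hρ.le]; simp)
    intro ρ hρ
    have hρpos := hρ.1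
    have hQ : |Qpot ρ| ≤ K3 := by
      simpa [Real.norm_eq_abs] using hK3 ρ ⟨hρ.1.le, hρ.2⟩
    have hnv := hnv2 ρ hρ
    have hnvM' := hnvM ρ hρ
    have h12 : 12/ρ^2 * ‖v ρ‖^2 ≤ 12*D^2 := by
      rw [div_mul_eq_mul_div, div_le_iff₀ (by positivity)]
      nlinarith
    have habs : |qpot ρ| ≤ ρ^2/16 + 12/ρ^2 + 3/4 + K3 := by
      rw [qpot]
      calc |ρ^2/16 + 12/ρ^2 + 3/4 + Qpot ρ| ≤ |ρ^2/16 + 12/ρ^2 + 3/4| + |Qpot ρ| :=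
            abs_add_le _ _
        _ ≤ ρ^2/16 + 12/ρ^2 + 3/4 + K3 := by
            rw [abs_of_nonneg (by positivity)]; linarith
    rw [abs_mul, abs_of_nonneg (by positivity : (0:ℝ) ≤ ‖v ρ‖^2)]
    have hmul : |qpot ρ| * ‖v ρ‖^2 ≤ (ρ^2/16 + 12/ρ^2 + 3/4 + K3) * ‖v ρ‖^2 :=
      mul_le_mul_of_nonneg_right habs (by positivity)
    have hsplit : (ρ^2/16 + 12/ρ^2 + 3/4 + K3) * ‖v ρ‖^2
        = (ρ^2/16 + 3/4 + K3) * ‖v ρ‖^2 + 12/ρ^2 * ‖v ρ‖^2 := by ring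
    have hρM : ρ^2 ≤ M^2 := by nlinarith [hρ.1.le, hρ.2]
    have hmain : (ρ^2/16 + 3/4 + K3) * ‖v ρ‖^2 ≤ (M^2/16 + 3/4 + K3)*(D^2*M^2) := by
      have := mul_le_mul (show ρ^2/16 + 3/4 + K3 ≤ M^2/16 + 3/4 + K3 by linarith)
        hnvM' (by positivity) (by positivity)
      linarith
    linarith
  -- integrability of g1
  have hWc : ContinuousOn (fun ρ => (Wsusy ρ : ℂ)) (Ioi 0) :=
    Complex.continuous_ofReal.comp_continuousOn Wsusy_contOn
  have hIg1 : IntegrableOn g1 (Ioi 0) := by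
    apply intOn_helper (g := fun ρ => ‖deriv v ρ + (Wsusy ρ : ℂ) * v ρ‖^2) (K := (D + K1*D)^2) hMpos
      (((hdc.add (hWc.mul hvcIoi)).norm).pow 2)
    · intro ρ hρ
      rw [hvz ρ hρ.le, hdz ρ hρ]
      simp
    · intro ρ hρ
      have hn : ‖deriv v ρ + (Wsusy ρ : ℂ) * v ρ‖ ≤ D + K1*D := by
        have hWA : |WAf ρ| ≤ K1 := by
          simpa [Real.norm_eq_abs] using hK1 ρ ⟨hρ.1.le, hρ.2⟩
        have hWv : |Wsusy ρ| * ‖v ρ‖ ≤ K1 * D := by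
          have h1 : |Wsusy ρ| * ‖v ρ‖ ≤ (|WAf ρ|/ρ) * (D * ρ) := by
            rw [← hWabs ρ hρ]
            exact mul_le_mul_of_nonneg_left (hvb ρ hρ.1) (abs_nonneg _)
          have hρne : ρ ≠ 0 := hρ.1.ne'
          have h2 : (|WAf ρ|/ρ) * (D * ρ) = |WAf ρ| * D := by
            field_simp
          rw [h2] at h1
          exact le_trans h1 (mul_le_mul_of_nonneg_right hWA hD0)
        calc ‖deriv v ρ + (Wsusy ρ : ℂ) * v ρ‖
            ≤ ‖deriv v ρ‖ + ‖(Wsusy ρ : ℂ) * v ρ‖ := norm_add_le _ _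
          _ ≤ D + K1*D := by
              rw [norm_mul, Complex.norm_real, Real.norm_eq_abs]
              exact add_le_add (hDb ρ hρ) hWv
      rw [abs_of_nonneg (by positivity)]
      exact pow_le_pow_left₀ (norm_nonneg _) hn 2
  -- integrability of g2
  have hIg2 : IntegrableOn g2 (Ioi 0) := by
    apply intOn_helper (g := fun ρ => (qpot ρ - 1/75 - (Wsusy ρ)^2 + Wdsusy ρ) * ‖v ρ‖^2)
      (K := ((M^2/16 + 3/4 + K3)*(D^2*M^2) + 12*D^2) + (1/75)*(D^2*M^2)
        + K1^2*D^2 + K2*D^2) hMpos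
      ((((qpot_contOn.sub continuousOn_const).sub (Wsusy_contOn.pow 2)).add
        Wdsusy_contOn).mul hnv_cont)
    · intro ρ hρ
      rw [hvz ρ hρ.le]
      simp
    · intro ρ hρ
      have hρpos := hρ.1
      have hnv := hnv2 ρ hρ
      have hnvM' := hnvM ρ hρ
      have hWA : |WAf ρ| ≤ K1 := by
        simpa [Real.norm_eq_abs] using hK1 ρ ⟨hρ.1.le, hρ.2⟩
      have hWB : |WBf ρ| ≤ K2 := by
        simpa [Real.norm_eq_abs] using hK2 ρ ⟨hρ.1.le, hρ.2⟩
      have hQ : |Qpot ρ| ≤ K3 := by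
        simpa [Real.norm_eq_abs] using hK3 ρ ⟨hρ.1.le, hρ.2⟩
      have hρM : ρ^2 ≤ M^2 := by nlinarith [hρ.1.le, hρ.2]
      -- |q| * nv ≤ Kq
      have h12 : 12/ρ^2 * ‖v ρ‖^2 ≤ 12*D^2 := by
        rw [div_mul_eq_mul_div, div_le_iff₀ (by positivity)]
        nlinarith
      have habs : |qpot ρ| ≤ ρ^2/16 + 12/ρ^2 + 3/4 + K3 := by
        rw [qpot]
        calc |ρ^2/16 + 12/ρ^2 + 3/4 + Qpot ρ| ≤ |ρ^2/16 + 12/ρ^2 + 3/4| + |Qpot ρ| :=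
              abs_add_le _ _
          _ ≤ ρ^2/16 + 12/ρ^2 + 3/4 + K3 := by
              rw [abs_of_nonneg (by positivity)]; linarith
      have t1 : |qpot ρ| * ‖v ρ‖^2 ≤ (M^2/16 + 3/4 + K3)*(D^2*M^2) + 12*D^2 := by
        have hmul : |qpot ρ| * ‖v ρ‖^2 ≤ (ρ^2/16 + 12/ρ^2 + 3/4 + K3) * ‖v ρ‖^2 :=
          mul_le_mul_of_nonneg_right habs (by positivity)
        have hmain : (ρ^2/16 + 3/4 + K3) * ‖v ρ‖^2 ≤ (M^2/16 + 3/4 + K3)*(D^2*M^2) := by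
          have := mul_le_mul (show ρ^2/16 + 3/4 + K3 ≤ M^2/16 + 3/4 + K3 by linarith)
            hnvM' (by positivity) (by positivity)
          linarith
        have hdist0 : (ρ^2/16 + 12/ρ^2 + 3/4 + K3) * ‖v ρ‖^2
            = (ρ^2/16 + 3/4 + K3) * ‖v ρ‖^2 + 12/ρ^2 * ‖v ρ‖^2 := by ring
        linarith
      -- W^2 * nv ≤ K1^2 D^2
      have t2 : (Wsusy ρ)^2 * ‖v ρ‖^2 ≤ K1^2*D^2 := by
        have hsq : (Wsusy ρ)^2 = WAf ρ^2/ρ^2 := by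
          rw [WAf_eq hρ.1.ne', div_pow]
        rw [hsq, div_mul_eq_mul_div, div_le_iff₀ (by positivity)]
        have hA2 : WAf ρ^2 ≤ K1^2 := by
          have h := sq_abs (WAf ρ)
          nlinarith [abs_nonneg (WAf ρ)]
        calc WAf ρ^2 * ‖v ρ‖^2 ≤ K1^2 * (D^2*ρ^2) :=
              mul_le_mul hA2 hnv (by positivity) (by positivity)
          _ = K1^2*D^2*ρ^2 := by ring
      -- |Wd| * nv ≤ K2 D^2
      have t3 : |Wdsusy ρ| * ‖v ρ‖^2 ≤ K2*D^2 := by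
        rw [hWdabs ρ hρ, div_mul_eq_mul_div, div_le_iff₀ (by positivity)]
        calc |WBf ρ| * ‖v ρ‖^2 ≤ K2 * (D^2*ρ^2) :=
              mul_le_mul hWB hnv (by positivity) hK20
          _ = K2*D^2*ρ^2 := by ring
      -- combine
      have hexp : |qpot ρ - 1/75 - (Wsusy ρ)^2 + Wdsusy ρ|
          ≤ |qpot ρ| + 1/75 + (Wsusy ρ)^2 + |Wdsusy ρ| := by
        rw [abs_le]
        constructor <;>
          nlinarith [neg_abs_le (qpot ρ), le_abs_self (qpot ρ),
            neg_abs_le (Wdsusy ρ), le_abs_self (Wdsusy ρ), sq_nonneg (Wsusy ρ)]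
      rw [abs_mul, abs_of_nonneg (by positivity : (0:ℝ) ≤ ‖v ρ‖^2)]
      have hmul := mul_le_mul_of_nonneg_right hexp
        (by positivity : (0:ℝ) ≤ ‖v ρ‖^2)
      have h75 : (1/75) * ‖v ρ‖^2 ≤ (1/75)*(D^2*M^2) := by linarith
      have hdist : (|qpot ρ| + 1/75 + (Wsusy ρ)^2 + |Wdsusy ρ|) * ‖v ρ‖^2
          = |qpot ρ| * ‖v ρ‖^2 + (1/75) * ‖v ρ‖^2 + (Wsusy ρ)^2 * ‖v ρ‖^2
            + |Wdsusy ρ| * ‖v ρ‖^2 := by ring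
      linarith [t1, t2, t3]
  -- FTC for F = -(Wsusy * ‖v‖²)
  set F : ℝ → ℝ := fun ρ => -(Wsusy ρ * ‖v ρ‖^2) with hFdef
  have hF0 : F 0 = 0 := by simp [hFdef, h0]
  have hFcont : ContinuousWithinAt F (Ici 0) 0 := by
    have hb : ∀ᶠ x in nhdsWithin 0 (Ici 0), ‖F x‖ ≤ (K1*D^2) * x := by
      filter_upwards [self_mem_nhdsWithin,
        mem_nhdsWithin_of_mem_nhds (Iic_mem_nhds hMpos)] with x hx1 hx2
      rcases eq_or_lt_of_le (mem_Ici.mp hx1) with h | h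
      · simp [hFdef, ← h, h0]
      · have hxm : x ∈ Ioc (0:ℝ) M := ⟨h, hx2⟩
        have h1 : ‖F x‖ = |Wsusy x| * ‖v x‖^2 := by
          rw [Real.norm_eq_abs, abs_neg, abs_mul,
            abs_of_nonneg (by positivity : (0:ℝ) ≤ ‖v x‖^2)]
        rw [h1, hWabs x hxm]
        have hWA : |WAf x| ≤ K1 := by
          simpa [Real.norm_eq_abs] using hK1 x ⟨h.le, hx2⟩
        have hnv := hnv2 x hxm
        calc |WAf x|/x * ‖v x‖^2 ≤ K1/x * (D^2*x^2) :=
              mul_le_mul ((div_le_div_iff_of_pos_right h).2 hWA) hnv (by positivity)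
                (div_nonneg hK10 h.le)
          _ = K1*D^2*x := by field_simp
    have htends : Filter.Tendsto (fun x : ℝ => K1*D^2*x) (nhdsWithin 0 (Ici 0)) (nhds 0) := by
      have h : Filter.Tendsto (fun x : ℝ => K1*D^2*x) (nhds 0) (nhds (K1*D^2*0)) :=
        (continuous_const.mul continuous_id).tendsto 0
      simpa using h.mono_left nhdsWithin_le_nhds
    have : Filter.Tendsto F (nhdsWithin 0 (Ici 0)) (nhds 0) := squeeze_zero_norm' hb htends
    rw [ContinuousWithinAt, hF0]
    exact this
  have hFderiv : ∀ ρ ∈ Ioi (0:ℝ), HasDerivAt F (g3 ρ) ρ := by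
    intro ρ hρ
    have hre : HasDerivAt (fun t => (v t).re) ((deriv v ρ).re) ρ := by
      have h := Complex.reCLM.hasFDerivAt.comp_hasDerivAt ρ (hder ρ hρ)
      simp at h
      exact h
    have him : HasDerivAt (fun t => (v t).im) ((deriv v ρ).im) ρ := by
      have h := Complex.imCLM.hasFDerivAt.comp_hasDerivAt ρ (hder ρ hρ)
      simp at h
      exact h
    have hnvd : HasDerivAt (fun t => ‖v t‖^2)
        (2*((v ρ).re*(deriv v ρ).re + (v ρ).im*(deriv v ρ).im)) ρ := by
      have h := (hre.pow 2).add (him.pow 2)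
      have hfun : (fun t => ‖v t‖^2) = fun t => (v t).re^2 + (v t).im^2 :=
        funext fun t => normsq_eq (v t)
      rw [hfun]
      refine h.congr_deriv ?_
      push_cast
      ring
    exact ((Wsusy_hasDeriv hρ).mul hnvd).neg
  have hFtop : Filter.Tendsto F Filter.atTop (nhds 0) := by
    have hev : (fun _ : ℝ => (0:ℝ)) =ᶠ[Filter.atTop] F := by
      filter_upwards [Filter.Ioi_mem_atTop M] with x hx
      simp [hFdef, hvz x hx.le]
    exact tendsto_const_nhds.congr' hev
  have hIg3 : IntegrableOn g3 (Ioi 0) := by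
    have hcomb : IntegrableOn
        (fun ρ => ‖deriv v ρ‖^2 + qpot ρ * ‖v ρ‖^2 - (1/75) * ‖v ρ‖^2 - g1 ρ - g2 ρ)
        (Ioi 0) := (((hIdv.add hIq).sub (hInv.const_mul (1/75))).sub hIg1).sub hIg2
    exact hcomb.congr_fun (fun ρ hρ => by have h := hpt ρ hρ; linarith) measurableSet_Ioi
  have hFTC : ∫ ρ in Ioi (0:ℝ), g3 ρ = 0 := by
    rw [MeasureTheory.integral_Ioi_of_hasDerivAt_of_tendsto hFcont hFderiv hIg3 hFtop, hF0]
    simp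
  -- nonnegativity of g1 and g2 integrals
  have hInt1 : 0 ≤ ∫ ρ in Ioi (0:ℝ), g1 ρ :=
    setIntegral_nonneg measurableSet_Ioi (fun ρ _ => by positivity)
  have hInt2 : 0 ≤ ∫ ρ in Ioi (0:ℝ), g2 ρ := by
    refine setIntegral_nonneg measurableSet_Ioi (fun ρ hρ => mul_nonneg ?_ (by positivity))
    have h := key_ineq (mem_Ioi.mp hρ)
    linarith
  -- assembly
  have hEq1 : (∫ ρ in Ioi (0:ℝ), (‖deriv v ρ‖^2 + qpot ρ * ‖v ρ‖^2 - (1/75) * ‖v ρ‖^2))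
      = (∫ ρ in Ioi (0:ℝ), g1 ρ) + (∫ ρ in Ioi (0:ℝ), g2 ρ) + ∫ ρ in Ioi (0:ℝ), g3 ρ := by
    have hIg12 : IntegrableOn (fun x => g1 x + g2 x) (Ioi 0) := hIg1.add hIg2
    have hstep : (∫ x in Ioi (0:ℝ), (g1 x + g2 x + g3 x))
        = (∫ x in Ioi (0:ℝ), (g1 x + g2 x)) + ∫ x in Ioi (0:ℝ), g3 x :=
      integral_add hIg12 hIg3
    have hstep2 : (∫ x in Ioi (0:ℝ), (g1 x + g2 x))
        = (∫ x in Ioi (0:ℝ), g1 x) + ∫ x in Ioi (0:ℝ), g2 x := integral_add hIg1 hIg2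
    rw [setIntegral_congr_fun measurableSet_Ioi hpt, hstep, hstep2]
  have hEq2 : (∫ ρ in Ioi (0:ℝ), (‖deriv v ρ‖^2 + qpot ρ * ‖v ρ‖^2 - (1/75) * ‖v ρ‖^2))
      = (∫ ρ in Ioi (0:ℝ), ‖deriv v ρ‖^2) + (∫ ρ in Ioi (0:ℝ), qpot ρ * ‖v ρ‖^2)
        - (1/75) * ∫ ρ in Ioi (0:ℝ), ‖v ρ‖^2 := by
    have hIqsum : IntegrableOn (fun ρ => ‖deriv v ρ‖^2 + qpot ρ * ‖v ρ‖^2) (Ioi 0) :=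
      hIdv.add hIq
    have hInv75 : IntegrableOn (fun ρ => (1/75) * ‖v ρ‖^2) (Ioi 0) := hInv.const_mul _
    have e1 : (∫ ρ in Ioi (0:ℝ), (‖deriv v ρ‖^2 + qpot ρ * ‖v ρ‖^2 - (1/75) * ‖v ρ‖^2))
        = (∫ ρ in Ioi (0:ℝ), (‖deriv v ρ‖^2 + qpot ρ * ‖v ρ‖^2))
          - ∫ ρ in Ioi (0:ℝ), (1/75) * ‖v ρ‖^2 := integral_sub hIqsum hInv75
    have e2 : (∫ ρ in Ioi (0:ℝ), (‖deriv v ρ‖^2 + qpot ρ * ‖v ρ‖^2))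
        = (∫ ρ in Ioi (0:ℝ), ‖deriv v ρ‖^2) + ∫ ρ in Ioi (0:ℝ), qpot ρ * ‖v ρ‖^2 :=
      integral_add hIdv hIq
    have e3 : (∫ ρ in Ioi (0:ℝ), (1/75) * ‖v ρ‖^2)
        = (1/75) * ∫ ρ in Ioi (0:ℝ), ‖v ρ‖^2 := integral_const_mul _ _
    rw [e1, e2, e3]
  linarith [hEq1, hEq2, hInt1, hInt2, hFTC]
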